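/- arXiv:math/9905211 — 6 statements merged into one kernel-verified Lean document; each statement's English description precedes it below -/
import Mathlib

section
/- Let M = ℤ^{2n} with the standard symplectic (unimodular alternating) form λ, n ≥ 1. For any two pairs (e, f) and (e', f') of elements of M with λ(e,f) = 1 and λ(e',f') = 1, there is an isometry of (M, λ) carrying e to e' and f to f'. In particular, the isometry group acts transitively on hyperbolic pairs and hence on unimodular (primitive) vectors. -/
/-- The standard symplectic form on `ℤ^{2n} = (Fin n → ℤ) × (Fin n → ℤ)`. -/
def sympForm (n : ℕ) (x y : (Fin n → ℤ) × (Fin n → ℤ)) : ℤ :=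
  (∑ i, x.1 i * y.2 i) - ∑ i, y.1 i * x.2 i

namespace SympAux

variable {n : ℕ}

lemma B_add_left (x y z : (Fin n → ℤ) × (Fin n → ℤ)) :
    sympForm n (x + y) z = sympForm n x z + sympForm n y z := by
  simp [sympForm, add_mul, mul_add, Finset.sum_add_distrib]; ring

lemma B_add_right (x y z : (Fin n → ℤ) × (Fin n → ℤ)) :
    sympForm n x (y + z) = sympForm n x y + sympForm n x z := by
  simp [sympForm, add_mul, mul_add, Finset.sum_add_distrib]; ring

lemma B_smul_left (c : ℤ) (x z : (Fin n → ℤ) × (Fin n → ℤ)) :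
    sympForm n (c • x) z = c * sympForm n x z := by
  simp only [sympForm, Prod.smul_fst, Prod.smul_snd, Pi.smul_apply, smul_eq_mul, mul_sub,
    Finset.mul_sum]
  congr 1 <;> exact Finset.sum_congr rfl (fun i _ => by ring)

lemma B_smul_right (c : ℤ) (x z : (Fin n → ℤ) × (Fin n → ℤ)) :
    sympForm n x (c • z) = c * sympForm n x z := by
  simp only [sympForm, Prod.smul_fst, Prod.smul_snd, Pi.smul_apply, smul_eq_mul, mul_sub,
    Finset.mul_sum]
  congr 1 <;> exact Finset.sum_congr rfl (fun i _ => by ring)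

lemma B_self (x : (Fin n → ℤ) × (Fin n → ℤ)) : sympForm n x x = 0 := by
  simp [sympForm]

lemma B_skew (x y : (Fin n → ℤ) × (Fin n → ℤ)) : sympForm n x y = - sympForm n y x := by
  simp [sympForm]

lemma B_sub_right (x y z : (Fin n → ℤ) × (Fin n → ℤ)) :
    sympForm n x (y - z) = sympForm n x y - sympForm n x z := by
  simp [sympForm, sub_mul, mul_sub, Finset.sum_sub_distrib]; ring

lemma B_sub_left (x y z : (Fin n → ℤ) × (Fin n → ℤ)) :
    sympForm n (x - y) z = sympForm n x z - sympForm n y z := by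
  simp [sympForm, sub_mul, mul_sub, Finset.sum_sub_distrib]; ring

end SympAux

namespace SympAux2
open SympAux
variable {n : ℕ}

/-- Symplectic transvection `x ↦ x + k·λ(x,v)·v`. -/
def tv (n : ℕ) (k : ℤ) (v : (Fin n → ℤ) × (Fin n → ℤ)) :
    ((Fin n → ℤ) × (Fin n → ℤ)) ≃ₗ[ℤ] ((Fin n → ℤ) × (Fin n → ℤ)) where
  toFun x := x + (k * sympForm n x v) • v
  invFun x := x + (-k * sympForm n x v) • v
  map_add' x y := by
    simp only [B_add_left, mul_add, add_smul]; abel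
  map_smul' c x := by
    simp only [B_smul_left, RingHom.id_apply, smul_add, smul_smul]
    ring_nf
  left_inv x := by
    simp only [B_add_left, B_smul_left, B_self, mul_zero, add_zero]
    rw [show (-k * sympForm n x v) = -(k * sympForm n x v) by ring, neg_smul]
    abel
  right_inv x := by
    simp only [B_add_left, B_smul_left, B_self, mul_zero, add_zero]
    rw [show (-k * sympForm n x v) = -(k * sympForm n x v) by ring, neg_smul]
    abel

lemma tv_apply (k : ℤ) (v x : (Fin n → ℤ) × (Fin n → ℤ)) :
    tv n k v x = x + (k * sympForm n x v) • v := rfl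

lemma tv_isom (k : ℤ) (v x y : (Fin n → ℤ) × (Fin n → ℤ)) :
    sympForm n (tv n k v x) (tv n k v y) = sympForm n x y := by
  simp only [tv_apply, B_add_left, B_add_right, B_smul_left, B_smul_right, B_self, mul_zero,
    add_zero]
  rw [B_skew v y]
  ring

end SympAux2

namespace SympAux3
open SympAux SympAux2
variable {n : ℕ}

def GoalP (n : ℕ) (e f e' f' : (Fin n → ℤ) × (Fin n → ℤ)) : Prop :=
  ∃ g : ((Fin n → ℤ) × (Fin n → ℤ)) ≃ₗ[ℤ] ((Fin n → ℤ) × (Fin n → ℤ)),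
      (∀ x y, sympForm n (g x) (g y) = sympForm n x y) ∧ g e = e' ∧ g f = f'

lemma goal_left {e f e' f' : (Fin n → ℤ) × (Fin n → ℤ)}
    (s : ((Fin n → ℤ) × (Fin n → ℤ)) ≃ₗ[ℤ] ((Fin n → ℤ) × (Fin n → ℤ)))
    (hs : ∀ x y, sympForm n (s x) (s y) = sympForm n x y)
    (h : GoalP n (s e) (s f) e' f') : GoalP n e f e' f' := by
  obtain ⟨g, hg, hge, hgf⟩ := h
  exact ⟨s.trans g, fun x y => by
      simp only [LinearEquiv.trans_apply, hg, hs], by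
      simpa [LinearEquiv.trans_apply] using hge, by
      simpa [LinearEquiv.trans_apply] using hgf⟩

lemma goal_right {e f e' f' : (Fin n → ℤ) × (Fin n → ℤ)}
    (s : ((Fin n → ℤ) × (Fin n → ℤ)) ≃ₗ[ℤ] ((Fin n → ℤ) × (Fin n → ℤ)))
    (hs : ∀ x y, sympForm n (s x) (s y) = sympForm n x y)
    (h : GoalP n e f (s e') (s f')) : GoalP n e f e' f' := by
  obtain ⟨g, hg, hge, hgf⟩ := h
  have hs' : ∀ x y, sympForm n (s.symm x) (s.symm y) = sympForm n x y := by
    intro x y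
    have := hs (s.symm x) (s.symm y)
    simpa using this.symm
  refine ⟨g.trans s.symm, fun x y => by simp only [LinearEquiv.trans_apply, hs', hg], ?_, ?_⟩
  · simp only [LinearEquiv.trans_apply, hge, LinearEquiv.symm_apply_apply]
  · simp only [LinearEquiv.trans_apply, hgf, LinearEquiv.symm_apply_apply]

end SympAux3

namespace SympAux4
open SympAux SympAux2 SympAux3
variable {n : ℕ}

/-- Case `λ(e,e') = 1`: three transvections do the job. -/
lemma lemmaA {e f e' f' : (Fin n → ℤ) × (Fin n → ℤ)}
    (hef : sympForm n e f = 1) (he'f' : sympForm n e' f' = 1)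
    (hee' : sympForm n e e' = 1) : GoalP n e f e' f' := by
  set T1 := tv n 1 (e' - e) with hT1def
  have hT1e : T1 e = e' := by
    rw [hT1def, tv_apply, B_sub_right, hee', B_self e]
    norm_num
  set f1 := T1 f with hf1def
  have h1 : sympForm n e' f1 = 1 := by
    have h := tv_isom (n := n) 1 (e' - e) e f
    rw [hef] at h
    rw [hf1def, ← hT1e]
    exact h
  have h1' : sympForm n f1 e' = -1 := by rw [B_skew, h1]
  set c1 := sympForm n f1 f' with hc1def
  set T2 := tv n (c1 - 1) e' with hT2def
  have hT2e' : T2 e' = e' := by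
    rw [hT2def, tv_apply, B_self, mul_zero, zero_smul, add_zero]
  set f2 := T2 f1 with hf2def
  have hf2 : f2 = f1 + ((c1 - 1) * -1) • e' := by
    rw [hf2def, hT2def, tv_apply, h1']
  have h2a : sympForm n e' f2 = 1 := by
    rw [hf2, B_add_right, B_smul_right, B_self, h1]; ring
  have h2b : sympForm n f2 f' = 1 := by
    rw [hf2, B_add_left, B_smul_left, he'f', ← hc1def]; ring
  set T3 := tv n 1 (f' - f2) with hT3def
  have hT3e' : T3 e' = e' := by
    rw [hT3def, tv_apply, B_sub_right, he'f', h2a]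
    norm_num
  have hT3f2 : T3 f2 = f' := by
    rw [hT3def, tv_apply, B_sub_right, h2b, B_self, sub_zero, one_mul, one_smul]
    abel
  refine ⟨(T1.trans T2).trans T3, fun x y => ?_, ?_, ?_⟩
  · simp only [LinearEquiv.trans_apply, hT1def, hT2def, hT3def, tv_isom]
  · simp only [LinearEquiv.trans_apply]
    rw [hT1e, hT2e', hT3e']
  · simp only [LinearEquiv.trans_apply]
    rw [← hf1def, ← hf2def, hT3f2]

end SympAux4

namespace SympAux5
open SympAux SympAux2 SympAux3 SympAux4
variable {n : ℕ}

/-- Case `λ(e,f') = 0`: one more transvection reduces to `lemmaA`. -/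
lemma lemmaP2 {e f e' f' : (Fin n → ℤ) × (Fin n → ℤ)}
    (hef : sympForm n e f = 1) (he'f' : sympForm n e' f' = 1)
    (ha : sympForm n e f' = 0) : GoalP n e f e' f' := by
  have hf'e' : sympForm n f' e' = -1 := by rw [B_skew, he'f']
  set b := sympForm n f e' with hbdef
  set d := sympForm n e e' with hddef
  set w := f + (b - 1) • f' with hwdef
  have hew : sympForm n e w = 1 := by
    rw [hwdef, B_add_right, B_smul_right, hef, ha]; ring
  have hwe' : sympForm n w e' = 1 := by
    rw [hwdef, B_add_left, B_smul_left, hf'e', ← hbdef]; ring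
  set s := tv n (1 - d) w with hsdef
  have hse : s e = e + ((1 - d) * 1) • w := by rw [hsdef, tv_apply, hew]
  have hsee' : sympForm n (s e) e' = 1 := by
    rw [hse, B_add_left, B_smul_left, hwe', ← hddef]; ring
  apply goal_left s (fun x y => by rw [hsdef]; exact tv_isom _ _ _ _)
  exact lemmaA (by rw [hsdef, tv_isom]; exact hef) he'f' hsee'

end SympAux5

namespace SympAux6
open SympAux SympAux2 SympAux3 SympAux4 SympAux5
variable {n : ℕ}

lemma phase1 (m : ℕ) : ∀ e f e' f' : (Fin n → ℤ) × (Fin n → ℤ),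
    sympForm n e f = 1 → sympForm n e' f' = 1 → (sympForm n e f').natAbs ≤ m →
    GoalP n e f e' f' := by
  induction m with
  | zero =>
    intro e f e' f' hef he'f' hle
    exact lemmaP2 hef he'f' (Int.natAbs_eq_zero.mp (Nat.le_zero.mp hle))
  | succ m ih =>
    intro e f e' f' hef he'f' hle
    by_cases ha0 : sympForm n e f' = 0
    · exact lemmaP2 hef he'f' ha0
    · set a := sympForm n e f' with hadef
      set d := sympForm n e e' with hddef
      set b0 : ℤ := (a.natAbs : ℤ) with hb0def
      have hb0pos : 0 < b0 := by
        rw [hb0def]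
        exact_mod_cast Nat.pos_of_ne_zero (fun h => ha0 (Int.natAbs_eq_zero.mp h))
      set d1 := d % b0 with hd1def
      have hd1nonneg : 0 ≤ d1 := Int.emod_nonneg d (ne_of_gt hb0pos)
      have hd1lt : d1 < b0 := Int.emod_lt_of_pos d hb0pos
      obtain ⟨k1, hk1⟩ : ∃ k1 : ℤ, d + k1 * a = d1 := by
        rcases Int.natAbs_eq a with h | h
        · refine ⟨-(d / b0), ?_⟩
          rw [hd1def, Int.emod_def, hb0def, ← h]
          ring
        · refine ⟨d / b0, ?_⟩
          have ha' : a = -b0 := by rw [hb0def, ← h]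
          rw [hd1def, Int.emod_def, ha']
          ring
      set s1 := tv n k1 f' with hs1def
      have hs1f' : s1 f' = f' := by
        rw [hs1def, tv_apply, B_self, mul_zero, zero_smul, add_zero]
      have hs1e' : s1 e' = e' + (k1 * 1) • f' := by
        rw [hs1def, tv_apply, he'f']
      have hE : sympForm n e (s1 e') = d1 := by
        rw [hs1e', B_add_right, B_smul_right, ← hadef, ← hddef, ← hk1]
        ring
      have hP : sympForm n (s1 e') (s1 f') = 1 := by
        rw [hs1def, tv_isom]
        exact he'f'
      have hP' : sympForm n (s1 e') f' = 1 := by rw [← hs1f']; exact hP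
      have hF : sympForm n f' (s1 e') = -1 := by rw [B_skew, hP']
      by_cases hd1zero : d1 = 0
      · -- d1 = 0 : two more moves to make the pairing with f' zero
        set s2 := tv n 1 f' with hs2def
        have hs2f' : s2 f' = f' := by
          rw [hs2def, tv_apply, B_self, mul_zero, zero_smul, add_zero]
        set E2 := s2 (s1 e') with hE2def
        have hE2 : E2 = s1 e' + ((1 : ℤ) * 1) • f' := by
          rw [hE2def, hs2def, tv_apply, hP']
        have heE2 : sympForm n e E2 = a := by
          rw [hE2, B_add_right, B_smul_right, hE, ← hadef, hd1zero]
          ring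
        have hf'E2 : sympForm n f' E2 = -1 := by
          rw [hE2, B_add_right, B_smul_right, hF, B_self]
          ring
        set s3 := tv n 1 E2 with hs3def
        have hs3E2 : s3 E2 = E2 := by
          rw [hs3def, tv_apply, B_self, mul_zero, zero_smul, add_zero]
        set F3 := s3 f' with hF3def
        have hF3 : F3 = f' + ((1 : ℤ) * -1) • E2 := by
          rw [hF3def, hs3def, tv_apply, hf'E2]
        have heF3 : sympForm n e F3 = 0 := by
          rw [hF3, B_add_right, B_smul_right, heE2, ← hadef]
          ring
        set S := (s1.trans s2).trans s3 with hSdef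
        have hSisom : ∀ x y, sympForm n (S x) (S y) = sympForm n x y := by
          intro x y
          rw [hSdef]
          simp only [LinearEquiv.trans_apply, hs1def, hs2def, hs3def, tv_isom]
        have hSe' : S e' = E2 := by
          rw [hSdef]
          simp only [LinearEquiv.trans_apply]
          rw [← hE2def, hs3E2]
        have hSf' : S f' = F3 := by
          rw [hSdef]
          simp only [LinearEquiv.trans_apply]
          rw [hs1f', hs2f', ← hF3def]
        have hE2F3 : sympForm n E2 F3 = 1 := by
          rw [← hSe', ← hSf', hSisom]
          exact he'f'
        apply goal_right S hSisom
        rw [hSe', hSf']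
        exact lemmaP2 hef hE2F3 heF3
      · -- 0 < d1 : reduce |a| and use the induction hypothesis
        have hd1pos : 0 < d1 := lt_of_le_of_ne hd1nonneg (Ne.symm hd1zero)
        set k2 := a / d1 with hk2def
        set a2 := a % d1 with ha2def
        have ha2nonneg : 0 ≤ a2 := Int.emod_nonneg a (ne_of_gt hd1pos)
        have ha2lt : a2 < d1 := Int.emod_lt_of_pos a hd1pos
        set s2 := tv n k2 (s1 e') with hs2def
        have hs2e' : s2 (s1 e') = s1 e' := by
          rw [hs2def, tv_apply, B_self, mul_zero, zero_smul, add_zero]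
        have hs2f' : s2 f' = f' + (k2 * -1) • s1 e' := by
          rw [hs2def, tv_apply, hF]
        have heF2 : sympForm n e (s2 f') = a2 := by
          rw [hs2f', B_add_right, B_smul_right, hE, ← hadef, ha2def, Int.emod_def, hk2def]
          ring
        set S := s1.trans s2 with hSdef
        have hSisom : ∀ x y, sympForm n (S x) (S y) = sympForm n x y := by
          intro x y
          rw [hSdef]
          simp only [LinearEquiv.trans_apply, hs1def, hs2def, tv_isom]
        have hSe' : S e' = s1 e' := by
          rw [hSdef]
          simp only [LinearEquiv.trans_apply]
          exact hs2e'
        have hSf' : S f' = s2 f' := by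
          rw [hSdef]
          simp only [LinearEquiv.trans_apply, hs1f']
        have hnew : sympForm n (S e') (S f') = 1 := by rw [hSisom]; exact he'f'
        have hmeas : (sympForm n e (S f')).natAbs ≤ m := by
          rw [hSf', heF2]
          have h1 : (a.natAbs : ℤ) ≤ (m : ℤ) + 1 := by exact_mod_cast hle
          omega
        apply goal_right S hSisom
        exact ih e f (S e') (S f') hef hnew hmeas

end SympAux6

/-- The isometry group of the standard symplectic form on `ℤ^{2n}` acts transitively on
hyperbolic pairs: given pairs `(e,f)` and `(e',f')` with `λ(e,f) = λ(e',f') = 1`, there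
is an isometry carrying `e` to `e'` and `f` to `f'`. -/
theorem symplectic_transitive_on_hyperbolic_pairs (n : ℕ) (hn : 1 ≤ n)
    (e f e' f' : (Fin n → ℤ) × (Fin n → ℤ))
    (he : sympForm n e f = 1) (he' : sympForm n e' f' = 1) :
    ∃ g : ((Fin n → ℤ) × (Fin n → ℤ)) ≃ₗ[ℤ] ((Fin n → ℤ) × (Fin n → ℤ)),
      (∀ x y, sympForm n (g x) (g y) = sympForm n x y) ∧ g e = e' ∧ g f = f' :=
  SympAux6.phase1 (sympForm n e f').natAbs e f e' f' he he' le_rfl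
end

section
/- Let M = ℤ^{2n} with the standard symplectic form λ. Then the group of isometries of (M, λ) acts transitively on the set of lagrangians, i.e. on direct summands L ⊂ M of rank n with λ(x,y) = 0 for all x, y ∈ L. -/
open Module Submodule

namespace SympAux

abbrev V (n : ℕ) := (Fin n → ℤ) × (Fin n → ℤ)

def Bf (n : ℕ) : V n →ₗ[ℤ] V n →ₗ[ℤ] ℤ :=
  LinearMap.mk₂ ℤ (sympForm n)
    (by intros x x' y; simp [sympForm, add_mul, mul_add, Finset.sum_add_distrib]; ring)
    (by intros c x y; simp [sympForm, mul_sub, Finset.mul_sum, mul_comm, mul_left_comm, mul_assoc])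
    (by intros x y y'; simp [sympForm, add_mul, mul_add, Finset.sum_add_distrib]; ring)
    (by intros c x y
        simp [sympForm, mul_sub, Finset.mul_sum, mul_comm, mul_left_comm, mul_assoc])

lemma Bf_apply (n : ℕ) (x y : V n) : Bf n x y = sympForm n x y := rfl

lemma Bf_skew (n : ℕ) (x y : V n) : Bf n x y = - Bf n y x := by
  simp [Bf_apply, sympForm]

def ee (n : ℕ) (i : Fin n) : V n := (Pi.single i 1, 0)
def ff (n : ℕ) (i : Fin n) : V n := (0, Pi.single i 1)

lemma repr_eq (n : ℕ) (x : V n) :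
    x = (∑ i, x.1 i • ee n i) + ∑ i, x.2 i • ff n i := by
  ext j <;>
    simp [ee, ff, Prod.fst_sum, Prod.snd_sum, Finset.sum_apply, Pi.single_apply, mul_comm]

lemma Bf_unimodular (n : ℕ) (ψ : V n →ₗ[ℤ] ℤ) : ∃ m : V n, ∀ x, Bf n x m = ψ x := by
  refine ⟨(fun i => -ψ (ff n i), fun i => ψ (ee n i)), fun x => ?_⟩
  conv_rhs => rw [repr_eq n x]
  rw [map_add, map_sum, map_sum]
  simp only [map_smul, smul_eq_mul]
  simp [Bf_apply, sympForm, Finset.sum_sub_distrib, mul_comm]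

lemma exists_symp_basis (n : ℕ) (L : Submodule ℤ (V n)) (hLc : ∃ C, IsCompl L C)
    (hLr : Module.finrank ℤ L = n) (hLi : ∀ x ∈ L, ∀ y ∈ L, sympForm n x y = 0) :
    ∃ b : Basis (Fin n ⊕ Fin n) ℤ (V n),
      (∀ i j, Bf n (b (.inl i)) (b (.inl j)) = 0) ∧
      (∀ i j, Bf n (b (.inl i)) (b (.inr j)) = if i = j then 1 else 0) ∧
      (∀ i j, Bf n (b (.inr i)) (b (.inr j)) = 0) ∧
      Submodule.span ℤ (Set.range fun i => b (.inl i)) = L := by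
  classical
  obtain ⟨C, hC⟩ := hLc
  set prL := L.linearProjOfIsCompl C hC with hprL
  set prC := C.linearProjOfIsCompl L hC.symm with hprC
  let bL : Basis (Fin n) ℤ L := Module.finBasisOfFinrankEq ℤ L hLr
  set e : Fin n → V n := fun i => (bL i : V n) with he
  have he_mem : ∀ i, e i ∈ L := fun i => (bL i).2
  have hee : ∀ i j, Bf n (e i) (e j) = 0 := fun i j =>
    hLi _ (he_mem i) _ (he_mem j)
  -- B vanishes between L and L
  have hLL : ∀ x ∈ L, ∀ y ∈ L, Bf n x y = 0 := hLi
  -- surjectivity onto coordinates: for any v there is m with B (e i) m = v i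
  have hsurj : ∀ v : Fin n → ℤ, ∃ m : V n, ∀ i, Bf n (e i) m = v i := by
    intro v
    obtain ⟨m, hm⟩ := Bf_unimodular n
      ((∑ j, v j • bL.coord j).comp prL)
    refine ⟨m, fun i => ?_⟩
    rw [hm]
    simp only [LinearMap.comp_apply]
    have : prL (e i) = bL i := Submodule.linearProjOfIsCompl_apply_left hC (bL i)
    rw [this]
    simp [Basis.coord_apply, Basis.repr_self, Finsupp.single_apply]
  -- the perp of L is L
  have hperp : ∀ y : V n, (∀ i, Bf n (e i) y = 0) → y ∈ L := by
    intro y hy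
    have hfinC : Module.finrank ℤ C = n := by
      have h1 := Submodule.prodEquivOfIsCompl L C hC
      have h2 : Module.finrank ℤ (L × C) = Module.finrank ℤ (V n) := h1.finrank_eq
      rw [Module.finrank_prod, hLr] at h2
      have h3 : Module.finrank ℤ (V n) = n + n := by simp [Module.finrank_prod]
      omega
    let bC : Basis (Fin n) ℤ C := Module.finBasisOfFinrankEq ℤ C hfinC
    let ρ : C →ₗ[ℤ] (Fin n → ℤ) := LinearMap.pi (fun i => (Bf n (e i)).comp C.subtype)
    have hρ_surj : Function.Surjective ρ := by
      intro v
      obtain ⟨m, hm⟩ := hsurj v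
      refine ⟨prC m, ?_⟩
      funext i
      have hdec : (prL m : V n) + (prC m : V n) = m :=
        Submodule.projection_add_projection_eq_self hC m
      have h2 := congrArg (fun z => Bf n (e i) z) hdec
      simp only [map_add] at h2
      simp only [ρ, LinearMap.pi_apply, LinearMap.comp_apply, Submodule.coe_subtype]
      have h3 := hLL _ (he_mem i) _ (prL m).2
      have h4 := hm i
      linarith
    have hρ_inj : Function.Injective ρ :=
      IsNoetherian.injective_of_surjective_of_injective
        bC.equivFun.toLinearMap ρ bC.equivFun.injective hρ_surj
    have hy' : ρ (prC y) = 0 := by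
      funext i
      have hdec : (prL y : V n) + (prC y : V n) = y :=
        Submodule.projection_add_projection_eq_self hC y
      have h2 := congrArg (fun z => Bf n (e i) z) hdec
      simp only [map_add] at h2
      show Bf n (e i) ((prC y : V n)) = (0 : Fin n → ℤ) i
      have h3 := hLL _ (he_mem i) _ (prL y).2
      have h4 := hy i
      simp only [Pi.zero_apply]
      linarith
    have : prC y = 0 := hρ_inj (by simpa using hy')
    have hdec : (prL y : V n) + (prC y : V n) = y :=
      Submodule.projection_add_projection_eq_self hC y
    rw [this] at hdec
    simp at hdec
    rw [← hdec]
    exact (prL y).2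
  -- choose dual family f
  choose f hf using fun j => hsurj (fun i => if i = j then 1 else 0)
  -- hf : ∀ j i, Bf n (e i) (f j) = if i = j then 1 else 0
  have hfe : ∀ i l, Bf n (f i) (e l) = -(if l = i then 1 else 0) := by
    intro i l; rw [Bf_skew, hf i l]
  obtain ⟨a, haval⟩ : ∃ a : Fin n → Fin n → ℤ,
      ∀ p q, a p q = if q < p then -(Bf n (f p) (f q)) else 0 := ⟨_, fun _ _ => rfl⟩
  obtain ⟨f', hf'd⟩ : ∃ f' : Fin n → V n,
      ∀ j, f' j = f j + ∑ k, a j k • e k := ⟨_, fun _ => rfl⟩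
  have hef' : ∀ i j, Bf n (e i) (f' j) = if i = j then 1 else 0 := by
    intro i j
    rw [hf'd j]
    simp only [map_add, map_sum, map_smul, smul_eq_mul]
    simp [hee, hf j i]
  have hf'e : ∀ i j, Bf n (f' i) (e j) = -(if j = i then 1 else 0) := by
    intro i j; rw [Bf_skew, hef' j i]
  have hskewf : ∀ p q, Bf n (f p) (f q) = -Bf n (f q) (f p) := fun p q => Bf_skew n _ _
  have hff' : ∀ i j, Bf n (f' i) (f' j) = 0 := by
    intro i j
    have expand : Bf n (f' i) (f' j) = Bf n (f i) (f j) + a i j - a j i := by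
      rw [hf'd i, hf'd j]
      simp only [map_add, map_sum, map_smul, LinearMap.add_apply, LinearMap.sum_apply,
        LinearMap.smul_apply, smul_eq_mul]
      simp [hf, hfe, hee, mul_ite, Finset.sum_ite_eq']
      ring
    rw [expand, haval, haval]
    rcases lt_trichotomy i j with h | h | h
    · rw [if_neg (not_lt.mpr h.le), if_pos h]
      rw [hskewf i j]
      ring
    · subst h
      rw [if_neg (lt_irrefl i)]
      have h9 : Bf n (f i) (f i) = 0 := by
        have h8 := hskewf i i
        omega
      rw [h9]
      ring
    · rw [if_pos h, if_neg (not_lt.mpr h.le)]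
      rw [hskewf i j]
      ring
  have hspanL : Submodule.span ℤ (Set.range e) = L := by
    have hr : Set.range e = L.subtype '' Set.range bL := by
      rw [← Set.range_comp]; rfl
    rw [hr, ← Submodule.map_span, bL.span_eq, Submodule.map_top, Submodule.range_subtype]
  have hmem_span : ∀ x : V n, x ∈ Submodule.span ℤ (Set.range (Sum.elim e f')) := by
    intro x
    have hsub : Set.range e ⊆ Set.range (Sum.elim e f') := by
      rintro _ ⟨i, rfl⟩; exact ⟨Sum.inl i, rfl⟩
    have hsub' : Set.range f' ⊆ Set.range (Sum.elim e f') := by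
      rintro _ ⟨i, rfl⟩; exact ⟨Sum.inr i, rfl⟩
    have hyL : x - ((∑ i, Bf n (e i) x • f' i) + ∑ i, Bf n x (f' i) • e i) ∈ L := by
      apply hperp
      intro i
      simp only [map_sub, map_add, map_sum, map_smul, smul_eq_mul]
      simp [hef', hee, mul_ite, Finset.sum_ite_eq']
    have hx : x = (x - ((∑ i, Bf n (e i) x • f' i) + ∑ i, Bf n x (f' i) • e i))
        + ((∑ i, Bf n (e i) x • f' i) + ∑ i, Bf n x (f' i) • e i) := by abel
    rw [hx]
    apply Submodule.add_mem
    · exact Submodule.span_mono hsub (hspanL ▸ hyL)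
    · apply Submodule.add_mem
      · exact Submodule.sum_mem _ fun i _ =>
          Submodule.smul_mem _ _ (Submodule.subset_span (hsub' ⟨i, rfl⟩))
      · exact Submodule.sum_mem _ fun i _ =>
          Submodule.smul_mem _ _ (Submodule.subset_span (hsub ⟨i, rfl⟩))
  have hindep : LinearIndependent ℤ (Sum.elim e f') := by
    rw [Fintype.linearIndependent_iff]
    intro g hg
    rw [Fintype.sum_sum_type] at hg
    simp only [Sum.elim_inl, Sum.elim_inr] at hg
    have hinl : ∀ j, g (Sum.inl j) = 0 := by
      intro j
      have h2 := congrArg (fun z => Bf n z (f' j)) hg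
      simp only [map_add, map_sum, map_smul, LinearMap.add_apply, LinearMap.sum_apply,
        LinearMap.smul_apply, smul_eq_mul, map_zero, LinearMap.zero_apply] at h2
      simpa [hef', hff', mul_ite, Finset.sum_ite_eq'] using h2
    have hinr : ∀ j, g (Sum.inr j) = 0 := by
      intro j
      have h2 := congrArg (fun z => Bf n (e j) z) hg
      simp only [map_add, map_sum, map_smul, smul_eq_mul, map_zero] at h2
      simpa [hef', hee, mul_ite, Finset.sum_ite_eq'] using h2
    intro s
    cases s with
    | inl i => exact hinl i
    | inr i => exact hinr i
  let b : Basis (Fin n ⊕ Fin n) ℤ (V n) :=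
    Basis.mk hindep (fun x _ => hmem_span x)
  have hb : ∀ s, b s = Sum.elim e f' s := fun s => Basis.mk_apply hindep _ s
  refine ⟨b, fun i j => ?_, fun i j => ?_, fun i j => ?_, ?_⟩
  · rw [hb, hb]; exact hee i j
  · rw [hb, hb]; exact hef' i j
  · rw [hb, hb]; exact hff' i j
  · have : (fun i => b (Sum.inl i)) = e := funext fun i => by rw [hb]; rfl
    rw [this, hspanL]

end SympAux

/-- The isometry group of the standard symplectic form on `ℤ^{2n}` acts transitively on
lagrangians, i.e. rank `n` direct summands on which the form vanishes identically. -/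
theorem symplectic_transitive_on_lagrangians (n : ℕ)
    (L L' : Submodule ℤ ((Fin n → ℤ) × (Fin n → ℤ)))
    (hLc : ∃ C, IsCompl L C) (hLc' : ∃ C, IsCompl L' C)
    (hLr : Module.finrank ℤ L = n) (hLr' : Module.finrank ℤ L' = n)
    (hLi : ∀ x ∈ L, ∀ y ∈ L, sympForm n x y = 0)
    (hLi' : ∀ x ∈ L', ∀ y ∈ L', sympForm n x y = 0) :
    ∃ g : ((Fin n → ℤ) × (Fin n → ℤ)) ≃ₗ[ℤ] ((Fin n → ℤ) × (Fin n → ℤ)),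
      (∀ x y, sympForm n (g x) (g y) = sympForm n x y) ∧
      Submodule.map (g : ((Fin n → ℤ) × (Fin n → ℤ)) →ₗ[ℤ] ((Fin n → ℤ) × (Fin n → ℤ))) L = L' := by
  obtain ⟨b, hee, hef, hff, hspan⟩ := SympAux.exists_symp_basis n L hLc hLr hLi
  obtain ⟨b', hee', hef', hff', hspan'⟩ := SympAux.exists_symp_basis n L' hLc' hLr' hLi'
  set g := b.equiv b' (Equiv.refl _) with hgdef
  have hg : ∀ s, g (b s) = b' s := fun s => by
    rw [hgdef, Basis.equiv_apply, Equiv.refl_apply]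
  refine ⟨g, ?_, ?_⟩
  · have key : (SympAux.Bf n).compl₁₂ (g : _ →ₗ[ℤ] _) (g : _ →ₗ[ℤ] _) = SympAux.Bf n := by
      apply LinearMap.ext_basis b b
      intro i j
      simp only [LinearMap.compl₁₂_apply, LinearEquiv.coe_coe, hg]
      cases i with
      | inl i =>
        cases j with
        | inl j => rw [hee', hee]
        | inr j => rw [hef', hef]
      | inr i =>
        cases j with
        | inl j =>
          rw [SympAux.Bf_skew n (b' (Sum.inr i)), SympAux.Bf_skew n (b (Sum.inr i)),
            hef', hef]
        | inr j => rw [hff', hff]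
    intro x y
    have h5 := LinearMap.congr_fun (LinearMap.congr_fun key x) y
    simpa only [LinearMap.compl₁₂_apply, LinearEquiv.coe_coe, SympAux.Bf_apply] using h5
  · rw [← hspan, Submodule.map_span, ← Set.range_comp]
    have hr : ((g : (SympAux.V n) →ₗ[ℤ] SympAux.V n) ∘ fun i => b (Sum.inl i))
        = fun i => b' (Sum.inl i) := funext fun i => hg _
    rw [hr]
    exact hspan'
end

section
/- Let M be a ℤ-module with an alternating bilinear form λ, let N ⊂ M be a submodule, and let H ⊂ M be a submodule with basis elements e, f satisfying λ(e,f) = 1 such that M = N ⊕ H and λ(n,h) = 0 for all n ∈ N, h ∈ H (orthogonal direct sum). Suppose L ⊂ M is a submodule with λ vanishing identically on L, and M = N ⊕ L as well. Write e = x_e + y_e and f = x_f + y_f with x_e, x_f ∈ N and y_e, y_f ∈ L. Then λ(x_e, x_e) = 0, λ(x_f, x_f) = 0, and λ(x_e, x_f) = −1; in particular x_e and −x_f form a hyperbolic pair in N. -/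
/-- Hyperbolic-plane extraction: if `M = N ⊥ H` is an orthogonal splitting for an
alternating form, `e, f ∈ H` with `B e f = 1`, and `L` is an isotropic complement of
`N` with `e = x_e + y_e`, `f = x_f + y_f` (`x_e, x_f ∈ N`, `y_e, y_f ∈ L`), then
`B x_e x_e = 0`, `B x_f x_f = 0` and `B x_e x_f = -1`; so `x_e, -x_f` is a hyperbolic
pair in `N`. -/
theorem hyperbolic_pair_extraction
    {M : Type*} [AddCommGroup M] [Module ℤ M]
    (B : M →ₗ[ℤ] M →ₗ[ℤ] ℤ) (halt : ∀ x, B x x = 0)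
    (N H L : Submodule ℤ M) (e f : M) (he : e ∈ H) (hf : f ∈ H)
    (hef : B e f = 1)
    (hNH : IsCompl N H) (horth : ∀ n ∈ N, ∀ h ∈ H, B n h = 0)
    (hLiso : ∀ x ∈ L, ∀ y ∈ L, B x y = 0) (hNL : IsCompl N L)
    (xe xf ye yf : M) (hxe : xe ∈ N) (hxf : xf ∈ N) (hye : ye ∈ L) (hyf : yf ∈ L)
    (hedec : e = xe + ye) (hfdec : f = xf + yf) :
    B xe xe = 0 ∧ B xf xf = 0 ∧ B xe xf = -1 := by
  have skew : ∀ x y : M, B x y = - B y x := by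
    intro x y
    have h := halt (x + y)
    simp [map_add, halt] at h
    linarith
  have h1 : B xe f = 0 := horth xe hxe f hf
  have h2 : B xf e = 0 := horth xf hxf e he
  have h3 : B e xf = 0 := by rw [skew e xf, h2]; ring
  have h4 : B ye yf = 0 := hLiso ye hye yf hyf
  have key : B e f = - B xe xf := by
    have hye' : ye = e - xe := by rw [hedec]; abel
    have hyf' : yf = f - xf := by rw [hfdec]; abel
    have := h4
    rw [hye', hyf'] at this
    simp [map_sub, h1, h3, halt, hef] at this
    linarith
  refine ⟨halt xe, halt xf, ?_⟩
  rw [hef] at key; linarith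
end

section
/- Let V and A be finitely generated free ℤ-modules, S : V → V* a symmetric injective linear map (S(v)(w) = S(w)(v)) whose cokernel is finite, and ρ : V → A a linear map with dual ρ* : A* → V*. Assume that for all v₁, v₂ ∈ V and α₁, α₂ ∈ A* with S(vᵢ) = ρ*(αᵢ) (i = 1,2) one has S(v₁)(v₂) = 0. Then for every v ∈ V and α ∈ A* with S(v) = ρ*(α), it follows that ρ(v) = 0. -/
/-- Step i) of Proposition 13 in Kreck's surgery paper: let `S : V → V*` be an
injective symmetric map with finite cokernel on a finitely generated free ℤ-module,
and `ρ : V → A`. If `S(v₁)(v₂) = 0` whenever `S(vᵢ) = ρ*(αᵢ)`, then `S(v) = ρ*(α)`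
implies `ρ(v) = 0`. -/
theorem rho_vanishes_of_in_dual_image
    {V A : Type*} [AddCommGroup V] [Module ℤ V] [Module.Free ℤ V] [Module.Finite ℤ V]
    [AddCommGroup A] [Module ℤ A] [Module.Free ℤ A] [Module.Finite ℤ A]
    (S : V →ₗ[ℤ] Module.Dual ℤ V) (hinj : Function.Injective S)
    (hsym : ∀ v w : V, S v w = S w v)
    (hfin : Finite (Module.Dual ℤ V ⧸ LinearMap.range S))
    (ρ : V →ₗ[ℤ] A)
    (h : ∀ (v₁ v₂ : V) (α₁ α₂ : Module.Dual ℤ A),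
      S v₁ = ρ.dualMap α₁ → S v₂ = ρ.dualMap α₂ → S v₁ v₂ = 0) :
    ∀ (v : V) (α : Module.Dual ℤ A), S v = ρ.dualMap α → ρ v = 0 := by
  intro v α hv
  rw [← Module.forall_dual_apply_eq_zero_iff ℤ (ρ v)]
  intro β
  -- the class of ρ* β in the finite cokernel has finite order
  set x : Module.Dual ℤ V := ρ.dualMap β with hx
  have hfo : IsOfFinAddOrder
      (Submodule.Quotient.mk x : Module.Dual ℤ V ⧸ LinearMap.range S) :=
    isOfFinAddOrder_of_finite _
  obtain ⟨n, hn, hnx⟩ := hfo.exists_nsmul_eq_zero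
  have hmem : (n : ℤ) • x ∈ LinearMap.range S := by
    have : (Submodule.Quotient.mk ((n : ℤ) • x) :
        Module.Dual ℤ V ⧸ LinearMap.range S) = 0 := by
      rw [Submodule.Quotient.mk_smul]
      simpa using hnx
    exact (Submodule.Quotient.mk_eq_zero _).mp this
  obtain ⟨w, hw⟩ := hmem
  have hw' : S w = ρ.dualMap ((n : ℤ) • β) := by
    rw [hw, map_smul]
  have h0 : S v w = 0 := h v w α ((n : ℤ) • β) hv hw'
  have : (n : ℤ) * β (ρ v) = 0 := by
    have := congrArg (fun f => f v) hw
    simp only [hx, LinearMap.smul_apply, LinearMap.dualMap_apply, smul_eq_mul] at this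
    rw [← this, ← hsym, h0]
  have hn' : (n : ℤ) ≠ 0 := Int.natCast_ne_zero.mpr hn.ne'
  exact (mul_eq_zero.mp this).resolve_left hn'
end

section
/- Let K be a finitely generated free ℤ-module with a symmetric bilinear form b, with adjoint map b̂ : K → K*. Suppose the cokernel of b̂ is torsion-free. Let rad(b) = {x ∈ K : b(x,y) = 0 for all y ∈ K}. Then K/rad(b) is a free ℤ-module and the induced symmetric bilinear form on K/rad(b) is unimodular (its adjoint is an isomorphism onto the dual of K/rad(b)). -/
/-!
The form descends to `Q = K ⧸ rad b`, and its adjoint `Q → Q*` is injective. Since `Q*` is the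
module of functionals on `K` vanishing on `rad b`, a functional `φ ∈ Q*` lies in the image of the
adjoint exactly when it lies in the image of `b̂`. The quotient `Q ≅ im b̂ ⊆ K*` is free, and an
injective map between free modules of the same finite rank has torsion cokernel, so some nonzero
multiple of `φ` lies in `im b̂`; torsion-freeness of `coker b̂` then puts `φ` itself there.
-/

open Module

theorem LinearMap.isTorsion_quotient_range {R M N : Type*} [CommRing R] [IsDomain R]
    [AddCommGroup M] [Module R M] [AddCommGroup N] [Module R N] [Module.Finite R N]
    {f : M →ₗ[R] N} (hf : Function.Injective f) (hrank : finrank R M = finrank R N) :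
    IsTorsion R (N ⧸ range f) := by
  rw [← finrank_eq_zero_iff_isTorsion]
  have := (range f).finrank_quotient_add_finrank
  rw [finrank_range_of_inj hf, hrank] at this
  omega

theorem Submodule.mem_of_smul_mem_of_isTorsionFree {R M : Type*} [CommRing R] [IsDomain R]
    [AddCommGroup M] [Module R M] {N : Submodule R M} [IsTorsionFree R (M ⧸ N)]
    {r : R} (hr : r ≠ 0) {x : M} (hx : r • x ∈ N) : x ∈ N := by
  rw [← Submodule.Quotient.mk_eq_zero] at hx ⊢
  rw [Submodule.Quotient.mk_smul] at hx
  exact (smul_eq_zero.mp hx).resolve_left hr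

theorem LinearMap.free_quotient_ker {R M N : Type*} [CommRing R] [IsDomain R]
    [IsPrincipalIdealRing R] [AddCommGroup M] [Module R M] [AddCommGroup N] [Module R N]
    [Free R N] [Module.Finite R N] (f : M →ₗ[R] N) : Free R (M ⧸ ker f) :=
  have : Free R (range f) := free_of_finite_type_torsion_free'
  Free.of_equiv f.quotKerEquivRange.symm

namespace LinearMap

section CommRing

variable {R M : Type*} [CommRing R] [AddCommGroup M] [Module R M]
  (b : M →ₗ[R] Dual R M) (hsym : ∀ x y, b x y = b y x)
include hsym

theorem range_le_dualAnnihilator_ker : range b ≤ (ker b).dualAnnihilator := by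
  rintro _ ⟨x, rfl⟩
  rw [Submodule.mem_dualAnnihilator]
  intro y hy
  rw [hsym, mem_ker.mp hy, zero_apply]

noncomputable def radicalQuotientForm : (M ⧸ ker b) →ₗ[R] Dual R (M ⧸ ker b) :=
  (ker b).dualCopairing ∘ₗ Submodule.inclusion (range_le_dualAnnihilator_ker b hsym) ∘ₗ
    b.quotKerEquivRange.toLinearMap

@[simp]
theorem radicalQuotientForm_mk_mk (x y : M) :
    radicalQuotientForm b hsym (Submodule.Quotient.mk x) (Submodule.Quotient.mk y) = b x y :=
  rfl

theorem dualMap_mkQ_radicalQuotientForm_mk (x : M) :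
    (ker b).mkQ.dualMap (radicalQuotientForm b hsym (Submodule.Quotient.mk x)) = b x :=
  rfl

theorem radicalQuotientForm_injective : Function.Injective (radicalQuotientForm b hsym) :=
  (ker b).dualQuotEquivDualAnnihilator.symm.injective.comp <|
    (Submodule.inclusion_injective (range_le_dualAnnihilator_ker b hsym)).comp
      b.quotKerEquivRange.injective

theorem mem_range_radicalQuotientForm_iff (φ : Dual R (M ⧸ ker b)) :
    φ ∈ range (radicalQuotientForm b hsym) ↔ (ker b).mkQ.dualMap φ ∈ range b := by
  constructor
  · rintro ⟨q, rfl⟩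
    obtain ⟨x, rfl⟩ := Submodule.Quotient.mk_surjective _ q
    exact ⟨x, rfl⟩
  · rintro ⟨x, hx⟩
    refine ⟨Submodule.Quotient.mk x, dualMap_injective_of_surjective (ker b).mkQ_surjective ?_⟩
    rw [dualMap_mkQ_radicalQuotientForm_mk, hx]

end CommRing

theorem radicalQuotientForm_surjective {R M : Type*} [CommRing R] [IsDomain R]
    [IsPrincipalIdealRing R] [AddCommGroup M] [Module R M] [Free R M] [Module.Finite R M]
    (b : M →ₗ[R] Dual R M) (hsym : ∀ x y, b x y = b y x)
    [IsTorsionFree R (Dual R M ⧸ range b)] :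
    Function.Surjective (radicalQuotientForm b hsym) := by
  have := free_quotient_ker b
  intro φ
  obtain ⟨⟨r, hr⟩, hrφ⟩ := isTorsion_quotient_range (radicalQuotientForm_injective b hsym)
    (Free.chooseBasis R (M ⧸ ker b)).toDualEquiv.finrank_eq (x := Submodule.Quotient.mk φ)
  rw [Submonoid.mk_smul, ← Submodule.Quotient.mk_smul, Submodule.Quotient.mk_eq_zero,
    mem_range_radicalQuotientForm_iff, map_smul] at hrφ
  exact (mem_range_radicalQuotientForm_iff b hsym φ).mpr <|
    Submodule.mem_of_smul_mem_of_isTorsionFree (nonZeroDivisors.ne_zero hr) hrφ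

end LinearMap

/-- Step iii) of Proposition 13 in Kreck's surgery paper: if the cokernel of the adjoint
`b̂ : K → K*` of a symmetric bilinear form on a finitely generated free ℤ-module is
torsion-free, then `K/rad(b)` is free and the induced form on it is unimodular. Note
`rad(b) = ker(b̂)`. -/
theorem quotient_by_radical_unimodular
    {K : Type*} [AddCommGroup K] [Module ℤ K] [Module.Free ℤ K] [Module.Finite ℤ K]
    (b : K →ₗ[ℤ] Module.Dual ℤ K) (hsym : ∀ x y : K, b x y = b y x)
    (htf : ∀ (x : Module.Dual ℤ K ⧸ LinearMap.range b) (n : ℤ), n • x = 0 → n = 0 ∨ x = 0) :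
    Module.Free ℤ (K ⧸ LinearMap.ker b) ∧
    ∃ b' : (K ⧸ LinearMap.ker b) →ₗ[ℤ] (K ⧸ LinearMap.ker b) →ₗ[ℤ] ℤ,
      (∀ x y : K, b' (Submodule.Quotient.mk x) (Submodule.Quotient.mk y) = b x y) ∧
      Function.Bijective b' := by
  -- `Module ℤ` on the quotient elaborates as `AddCommGroup.toIntModule`; switch to the quotient's.
  rw [Subsingleton.elim (AddCommGroup.toIntModule (K ⧸ LinearMap.ker b))
    (Submodule.Quotient.module _)]
  have : IsTorsionFree ℤ (Dual ℤ K ⧸ LinearMap.range b) := .of_smul_eq_zero fun n x ↦ htf x n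
  exact ⟨b.free_quotient_ker, b.radicalQuotientForm hsym, b.radicalQuotientForm_mk_mk hsym,
    b.radicalQuotientForm_injective hsym, b.radicalQuotientForm_surjective hsym⟩
end

section
/- Let Q = H₊(ℤ) ⊥ H₊(ℤ) be the orthogonal sum of two symmetric hyperbolic planes over ℤ, i.e. ℤ⁴ with symmetric bilinear form given in basis e₁,f₁,e₂,f₂ by λ(eᵢ,fᵢ)=1, λ(eᵢ,eᵢ)=λ(fᵢ,fᵢ)=0, and the two planes orthogonal. Then the isometry group of Q acts transitively on primitive vectors of any fixed square: if v, w ∈ ℤ⁴ are both primitive (part of a ℤ-basis, equivalently with coprime coordinates) and λ(v,v) = λ(w,w), then there is an isometry of Q carrying v to w. -/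
/-- The orthogonal sum of two symmetric hyperbolic planes over ℤ, as a bilinear form on
`ℤ⁴` in the basis `e₁, f₁, e₂, f₂`. -/
def hypSumForm (x y : Fin 4 → ℤ) : ℤ :=
  x 0 * y 1 + y 0 * x 1 + x 2 * y 3 + y 2 * x 3

/-!
Identify `ℤ⁴` with `M₂(ℤ)` via `x ↦ !![x₀, x₂; -x₃, x₁]`. The quadratic form of `H₊ ⊥ H₊`
becomes `2 det`, so `X ↦ A X B` with `A, B ∈ SL₂(ℤ)` is an isometry. A primitive vector
becomes a matrix whose entries generate the unit ideal, and such a matrix is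
`SL₂(ℤ) × SL₂(ℤ)`-equivalent to `diag(1, det)` (Smith normal form). The only arithmetic
input is that `c + t g` is prime to `b ≠ 0` for some `t` once `gcd(c, g, b) = 1`.
Two primitive vectors of the same square therefore reach the same diagonal matrix.
-/

open Matrix MatrixGroups

theorem Int.exists_isCoprime_add_mul {g c b : ℤ} (hb : b ≠ 0) (h : IsCoprime c (g.gcd b)) :
    ∃ t, IsCoprime (c + t * g) b := by
  -- Lift `c`, a unit mod `gcd g b`, to a unit `U` mod `b`; Bézout for `gcd g b` then
  -- rewrites `U ≡ c [ZMOD gcd g b]` as `U ≡ c + t g [ZMOD b]`.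
  have : NeZero b.natAbs := ⟨Int.natAbs_ne_zero.mpr hb⟩
  have hdvd : g.gcd b ∣ b.natAbs := Nat.gcd_dvd_right g.natAbs b.natAbs
  obtain ⟨u, hu⟩ := ZMod.unitsMap_surjective hdvd (ZMod.unitOfIsCoprime c h)
  set U : ℤ := (u : ZMod b.natAbs).cast
  have hU : IsCoprime U b := by
    have := (ZMod.coe_int_isUnit_iff_isCoprime U b.natAbs).mp (by simp [U])
    rw [Int.isCoprime_iff_nat_coprime] at this ⊢
    simpa [Nat.coprime_comm, Int.natAbs_abs] using this
  obtain ⟨k, hk⟩ : (g.gcd b : ℤ) ∣ U - c := by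
    rw [← ZMod.intCast_eq_intCast_iff_dvd_sub, ZMod.intCast_cast, ← ZMod.unitsMap_val hdvd,
      hu]
    rfl
  refine ⟨k * g.gcdA b, ?_⟩
  have hgcd := Int.gcd_eq_gcd_ab g b
  have hc : c + k * g.gcdA b * g = U + b * -(k * g.gcdB b) := by
    linear_combination -hk - k * hgcd
  rw [hc]
  exact hU.add_mul_left_left _

theorem LinearEquiv.exists_dual_apply_eq_one {R M N : Type*} [CommSemiring R]
    [AddCommMonoid M] [AddCommMonoid N] [Module R M] [Module R N] (e : M ≃ₗ[R] N) {x : M}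
    (h : ∃ φ : M →ₗ[R] R, φ x = 1) : ∃ ψ : N →ₗ[R] R, ψ (e x) = 1 :=
  let ⟨φ, hφ⟩ := h
  ⟨φ ∘ₗ e.symm.toLinearMap, by simpa using hφ⟩

namespace Matrix.SpecialLinearGroup

variable {n R : Type*} [Fintype n] [DecidableEq n] [CommRing R]

def mulLeftRight (A B : SpecialLinearGroup n R) : Matrix n n R ≃ₗ[R] Matrix n n R where
  toFun X := A * X * B
  invFun X := ↑A⁻¹ * X * ↑B⁻¹
  map_add' X Y := by simp only [Matrix.mul_add, Matrix.add_mul]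
  map_smul' c X := by simp
  left_inv X := by
    simp only [← Matrix.mul_assoc, ← coe_mul, inv_mul_cancel, coe_one, Matrix.one_mul]
    simp only [Matrix.mul_assoc, ← coe_mul, mul_inv_cancel, coe_one, Matrix.mul_one]
  right_inv X := by
    simp only [← Matrix.mul_assoc, ← coe_mul, mul_inv_cancel, coe_one, Matrix.one_mul]
    simp only [Matrix.mul_assoc, ← coe_mul, inv_mul_cancel, coe_one, Matrix.mul_one]

@[simp]
theorem mulLeftRight_apply (A B : SpecialLinearGroup n R) (X : Matrix n n R) :
    mulLeftRight A B X = A * X * B := rfl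

theorem det_mulLeftRight (A B : SpecialLinearGroup n R) (X : Matrix n n R) :
    (mulLeftRight A B X).det = X.det := by
  simp [det_mul]

end Matrix.SpecialLinearGroup

theorem Int.exists_SL2_mulVec_eq_gcd (v : Fin 2 → ℤ) :
    ∃ A : SL(2, ℤ), A.1 *ᵥ v = ![((v 0).gcd (v 1) : ℤ), 0] := by
  by_cases hn : (v 0).gcd (v 1) = 0
  · obtain ⟨h0, h1⟩ := Int.gcd_eq_zero_iff.mp hn
    refine ⟨1, ?_⟩
    ext i; fin_cases i <;> simp [h0, h1]
  obtain ⟨a, ha⟩ := Int.gcd_dvd_left (v 0) (v 1)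
  obtain ⟨e, he⟩ := Int.gcd_dvd_right (v 0) (v 1)
  have hbez := Int.gcd_eq_gcd_ab (v 0) (v 1)
  have hdet : (v 0).gcdA (v 1) * a + (v 0).gcdB (v 1) * e = 1 := by
    refine mul_left_cancel₀ (Int.natCast_ne_zero.mpr hn) ?_
    linear_combination -(v 0).gcdA (v 1) * ha - (v 0).gcdB (v 1) * he - hbez
  refine ⟨⟨!![(v 0).gcdA (v 1), (v 0).gcdB (v 1); -e, a], by simpa [det_fin_two] using hdet⟩,
    ?_⟩
  ext i; fin_cases i
  · simp [mulVec, dotProduct, Fin.sum_univ_two]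
    linear_combination -hbez
  · simp [mulVec, dotProduct, Fin.sum_univ_two]
    linear_combination a * he - e * ha

theorem Int.isCoprime_of_exists_dual_apply_eq_one {N : Matrix (Fin 2) (Fin 2) ℤ}
    (hN : ∃ φ : Matrix (Fin 2) (Fin 2) ℤ →ₗ[ℤ] ℤ, φ N = 1) (h10 : N 1 0 = 0) :
    IsCoprime (N 0 1) ((N 0 0).gcd (N 1 1)) := by
  obtain ⟨φ, hφ⟩ := hN
  have hN : N = N 0 0 • single 0 0 1 + N 0 1 • single 0 1 1 + N 1 1 • single 1 1 1 := by
    ext i j; fin_cases i <;> fin_cases j <;> simp [h10]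
  rw [hN, map_add, map_add, map_smul, map_smul, map_smul, smul_eq_mul, smul_eq_mul,
    smul_eq_mul] at hφ
  obtain ⟨a, ha⟩ := Int.gcd_dvd_left (N 0 0) (N 1 1)
  obtain ⟨b, hb⟩ := Int.gcd_dvd_right (N 0 0) (N 1 1)
  refine ⟨φ (single 0 1 1), a * φ (single 0 0 1) + b * φ (single 1 1 1), ?_⟩
  linear_combination hφ - φ (single 0 0 1) * ha - φ (single 1 1 1) * hb

theorem Int.exists_SL2_isCoprime_mul_apply_zero {M : Matrix (Fin 2) (Fin 2) ℤ}
    (h10 : M 1 0 = 0) (hM : IsCoprime (M 0 1) ((M 0 0).gcd (M 1 1))) :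
    ∃ B : SL(2, ℤ), IsCoprime ((M * B) 0 0) ((M * B) 1 0) := by
  suffices ∃ x y : ℤ, IsCoprime x y ∧ IsCoprime (M 0 0 * x + M 0 1 * y) (M 1 1 * y) by
    obtain ⟨x, y, hxy, hM⟩ := this
    obtain ⟨B, hB0, hB1⟩ := hxy.exists_SL2_col 0
    exact ⟨B, by simpa [mul_apply, Fin.sum_univ_two, h10, hB0, hB1] using hM⟩
  by_cases hb : M 1 1 = 0
  · obtain ⟨x, y, hxy⟩ : IsCoprime (M 0 0) (M 0 1) := by
      rw [hb, Int.gcd_zero_right, Int.isCoprime_iff_nat_coprime] at hM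
      rw [Int.isCoprime_iff_nat_coprime]
      simpa [Nat.coprime_comm, Int.natAbs_abs] using hM
    refine ⟨x, y, ⟨M 0 0, M 0 1, by linear_combination hxy⟩, ?_⟩
    rw [mul_comm (M 0 0), mul_comm (M 0 1), hxy]
    exact isCoprime_one_left
  · obtain ⟨t, ht⟩ := Int.exists_isCoprime_add_mul hb hM
    exact ⟨t, 1, isCoprime_one_right, by simpa [add_comm, mul_comm] using ht⟩

theorem Int.exists_SL2_mul_mul_eq_diagonal {M : Matrix (Fin 2) (Fin 2) ℤ}
    (hM : ∃ φ : Matrix (Fin 2) (Fin 2) ℤ →ₗ[ℤ] ℤ, φ M = 1) :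
    ∃ A B : SL(2, ℤ), A * M * B = !![1, 0; 0, M.det] := by
  obtain ⟨A₁, hA₁⟩ := Int.exists_SL2_mulVec_eq_gcd (fun i ↦ M i 0)
  set N := A₁.1 * M
  have hN10 : N 1 0 = 0 := congrFun hA₁ 1
  have hN : IsCoprime (N 0 1) ((N 0 0).gcd (N 1 1)) := by
    refine Int.isCoprime_of_exists_dual_apply_eq_one ?_ hN10
    simpa using (SpecialLinearGroup.mulLeftRight A₁ 1).exists_dual_apply_eq_one hM
  obtain ⟨B₁, hB₁⟩ := Int.exists_SL2_isCoprime_mul_apply_zero hN10 hN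
  obtain ⟨A₂, hA₂⟩ := Int.exists_SL2_mulVec_eq_gcd (fun i ↦ (N * B₁) i 0)
  set P := A₂.1 * (N * B₁)
  have hP00 : P 0 0 = 1 :=
    (congrFun hA₂ 0).trans (by simp [Int.isCoprime_iff_gcd_eq_one.mp hB₁])
  have hP10 : P 1 0 = 0 := congrFun hA₂ 1
  let T : SL(2, ℤ) := ⟨!![1, -P 0 1; 0, 1], by simp [det_fin_two]⟩
  have hdet : P.det = M.det := by simp [P, N, det_mul]
  refine ⟨A₂ * A₁, B₁ * T, ?_⟩
  calc (↑(A₂ * A₁) : Matrix (Fin 2) (Fin 2) ℤ) * M * ↑(B₁ * T) = P * T := by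
        simp [P, N, Matrix.mul_assoc]
    _ = !![1, 0; 0, P.det] := by
        ext i j; fin_cases i <;> fin_cases j <;>
          simp [T, mul_apply, Fin.sum_univ_two, det_fin_two, hP00, hP10]
    _ = !![1, 0; 0, M.det] := by rw [hdet]

def hypToMatrix : (Fin 4 → ℤ) ≃ₗ[ℤ] Matrix (Fin 2) (Fin 2) ℤ where
  toFun x := !![x 0, x 2; -x 3, x 1]
  invFun X := ![X 0 0, X 1 1, X 0 1, -X 1 0]
  map_add' x y := by ext i j; fin_cases i <;> fin_cases j <;> simp [add_comm]
  map_smul' c x := by ext i j; fin_cases i <;> fin_cases j <;> simp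
  left_inv x := by ext i; fin_cases i <;> simp
  right_inv X := by ext i j; fin_cases i <;> fin_cases j <;> simp

theorem hypSumForm_eq_det (x y : Fin 4 → ℤ) :
    hypSumForm x y =
      (hypToMatrix (x + y)).det - (hypToMatrix x).det - (hypToMatrix y).det := by
  simp [hypSumForm, hypToMatrix, det_fin_two]
  ring

theorem hypSumForm_self (x : Fin 4 → ℤ) : hypSumForm x x = 2 * (hypToMatrix x).det := by
  simp [hypSumForm, hypToMatrix, det_fin_two]
  ring

theorem hypSumForm_conj_apply {e : Matrix (Fin 2) (Fin 2) ℤ ≃ₗ[ℤ] Matrix (Fin 2) (Fin 2) ℤ}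
    (he : ∀ X, (e X).det = X.det) (x y : Fin 4 → ℤ) :
    hypSumForm ((hypToMatrix ≪≫ₗ e ≪≫ₗ hypToMatrix.symm) x)
      ((hypToMatrix ≪≫ₗ e ≪≫ₗ hypToMatrix.symm) y) = hypSumForm x y := by
  simp only [hypSumForm_eq_det, ← map_add, LinearEquiv.trans_apply,
    LinearEquiv.apply_symm_apply, he]

/-- Eichler/Bass transitivity: the isometry group of `H₊(ℤ) ⊥ H₊(ℤ)` acts transitively
on primitive (unimodular) vectors of fixed square. Primitivity of `v` is expressed by
the existence of a linear functional taking the value `1` on `v`. -/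
theorem hyperbolic_transitive_on_primitive_vectors
    (v w : Fin 4 → ℤ)
    (hv : ∃ φ : (Fin 4 → ℤ) →ₗ[ℤ] ℤ, φ v = 1)
    (hw : ∃ φ : (Fin 4 → ℤ) →ₗ[ℤ] ℤ, φ w = 1)
    (hsq : hypSumForm v v = hypSumForm w w) :
    ∃ g : (Fin 4 → ℤ) ≃ₗ[ℤ] (Fin 4 → ℤ),
      (∀ x y, hypSumForm (g x) (g y) = hypSumForm x y) ∧ g v = w := by
  obtain ⟨A, B, hAB⟩ :=
    Int.exists_SL2_mul_mul_eq_diagonal (hypToMatrix.exists_dual_apply_eq_one hv)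
  obtain ⟨C, D, hCD⟩ :=
    Int.exists_SL2_mul_mul_eq_diagonal (hypToMatrix.exists_dual_apply_eq_one hw)
  have hdet : (hypToMatrix v).det = (hypToMatrix w).det := by
    rw [hypSumForm_self, hypSumForm_self] at hsq
    omega
  let e := SpecialLinearGroup.mulLeftRight A B ≪≫ₗ (SpecialLinearGroup.mulLeftRight C D).symm
  have he : ∀ X, (e X).det = X.det := fun X ↦ by
    rw [← SpecialLinearGroup.det_mulLeftRight C D, LinearEquiv.trans_apply,
      LinearEquiv.apply_symm_apply, SpecialLinearGroup.det_mulLeftRight]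
  refine ⟨hypToMatrix ≪≫ₗ e ≪≫ₗ hypToMatrix.symm, hypSumForm_conj_apply he, ?_⟩
  have hvw : e (hypToMatrix v) = hypToMatrix w := by
    rw [LinearEquiv.trans_apply, LinearEquiv.symm_apply_eq]
    simp only [SpecialLinearGroup.mulLeftRight_apply, hAB, hCD, hdet]
  simp [hvw]
end
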